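/- arXiv:0912.1527 — 4 statements merged into one kernel-verified Lean document; each statement's English description precedes it below -/
import Mathlib

section
/- Let F ∈ ℤ[x1,x2,x3,x4] be a nonsingular homogeneous polynomial of degree k ≥ 3, and let M0 be the natural number from the covering lemma for F. Fix c > 0 and a positive integer m. Suppose M is a positive integer and S = [a1, a1 + (M0·M)^(−1)] × [a2, a2 + (M0·M)^(−1)] × [a3, a3 + (M0·M)^(−1)] ⊆ [−1,1]³ is a subcube of the partition which contains a point (t1,t2,t3) with |F(t1,t2,t3,1)| ≤ (M0·M)^(−1), and that |∂F/∂x3 (a1,a2,a3,1)| ≥ c. Then there exist polynomials Φ_m(u1,u2,w) and Ψ_m(u1,u2,u3,w), such that Φ_m has no constant term, every term of Ψ_m has degree at least m, both polynomials have degree at most D(F,c,m) and all coefficients of modulus at most H(F,c,m) for constants D and H depending only on F, c and m, and such that for every (t1,t2,t3) ∈ S, setting ui = ti − ai for i = 1,2,3 and w = F(t1,t2,t3,1) − F(a1,a2,a3,1), one has u3 = Φ_m(u1,u2,w) + u3·Ψ_m(u1,u2,u3,w). -/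
/-!
Put `G(u) = F(a + u, 1) - F(a, 1)`. Since `|a| ≤ 1`, the degree and the coefficients of `G` are
bounded independently of `a`; `G(0) = 0`, and the coefficient `L` of `u₃` in `G` is
`∂F/∂x₃(a, 1)`, so `|L| ≥ c`. Dividing out `u₃` gives `G(u) = G(u₁, u₂, 0) + u₃ δ(u)` with
`δ(0) = L`, hence `u₃ = Φ₁(u₁, u₂, w) + u₃ Ψ₁(u)` with `Φ₁ = (w - G(u₁, u₂, 0)) / L` and
`Ψ₁ = 1 - δ / L`, which vanishes at `0`. Iterate `x ↦ Φ₁ + x Ψ₁(u₁, u₂, x, w)` from `x₀ = 0`: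
if `q_k` is the divided difference of `y ↦ y Ψ₁(u₁, u₂, y, w)` between `u₃` and `x_k`, then
`u₃ - x_{k+1} = (u₃ - x_k) q_k`, so `u₃ = x_m + u₃ ∏_{k<m} q_k`. Every `q_k` vanishes at `0`,
so the product has order at least `m`. All of this is built from `G` and `L⁻¹` by ring
operations, substitutions and divided differences, each of which keeps the degree and the
`ℓ¹`-norm of the coefficients uniformly bounded; this gives `D` and `H`.
-/

namespace MvPolynomial

open Finset

variable {σ τ ι R : Type*}

section CommRing

variable [CommRing R]

lemma mem_idealOfVars_iff (p : MvPolynomial σ R) :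
    p ∈ idealOfVars σ R ↔ constantCoeff p = 0 := by
  rw [← pow_one (idealOfVars σ R), mem_pow_idealOfVars_iff', constantCoeff_eq]
  refine ⟨fun h => h 0 (by simp), fun h d hd => ?_⟩
  rwa [(Finsupp.degree_eq_zero_iff d).mp (Nat.lt_one_iff.mp hd)]

lemma X_mem_idealOfVars (i : σ) : (X i : MvPolynomial σ R) ∈ idealOfVars σ R :=
  Ideal.subset_span (Set.mem_range_self i)

lemma monomial_mem_pow_idealOfVars (d : σ →₀ ℕ) (c : R) :
    monomial d c ∈ idealOfVars σ R ^ d.degree :=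
  (mem_pow_idealOfVars_iff _ _).2 fun x hx => by
    rw [mem_singleton.mp (support_monomial_subset hx)]

lemma eval_aeval (x : τ → R) (f : σ → MvPolynomial τ R) (p : MvPolynomial σ R) :
    eval x (aeval f p) = eval (fun i => eval x (f i)) p := by
  simpa [coe_aeval_eq_eval, aeval_eq_bind₁] using aeval_bind₁ x f p

lemma constantCoeff_aeval (f : σ → MvPolynomial τ R) (p : MvPolynomial σ R) :
    constantCoeff (aeval f p) = eval (fun i => constantCoeff (f i)) p := by
  rw [← eval_zero, eval_aeval]

lemma totalDegree_aeval_le (f : σ → MvPolynomial τ R) (p : MvPolynomial σ R) {B : ℕ}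
    (hf : ∀ i, (f i).totalDegree ≤ B) : (aeval f p).totalDegree ≤ p.totalDegree * B := by
  conv_lhs => rw [p.as_sum, map_sum]
  refine totalDegree_finsetSum_le fun d hd => ?_
  rw [aeval_monomial, ← C_eq_algebraMap]
  refine (totalDegree_mul _ _).trans ?_
  rw [totalDegree_C, zero_add, Finsupp.prod]
  refine (totalDegree_finsetProd _ _).trans ?_
  calc ∑ i ∈ d.support, (f i ^ d i).totalDegree ≤ ∑ i ∈ d.support, d i * B :=
        sum_le_sum fun i _ => (totalDegree_pow _ _).trans (Nat.mul_le_mul_left _ (hf i))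
    _ = d.degree * B := by rw [← sum_mul, Finsupp.degree_apply]
    _ ≤ p.totalDegree * B := Nat.mul_le_mul_right _ (le_totalDegree hd)

lemma pderiv_aeval [Fintype σ] (f : σ → MvPolynomial τ R) (p : MvPolynomial σ R) (j : τ) :
    pderiv j (aeval f p) = ∑ i, aeval f (pderiv i p) * pderiv j (f i) := by
  classical
  induction p using MvPolynomial.induction_on with
  | C a => simp
  | add p q hp hq => simp only [map_add, hp, hq, add_mul, sum_add_distrib]
  | mul_X p i hp =>
    simp only [map_mul, aeval_X, pderiv_mul, hp, pderiv_X, map_add, add_mul, sum_add_distrib,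
      Pi.single_apply, mul_ite, mul_one, mul_zero, apply_ite (aeval f), map_zero, ite_mul,
      zero_mul, sum_ite_eq, mem_univ, if_true, sum_mul]
    congr 1
    exact sum_congr rfl fun _ _ => by ring

lemma coeff_single_aeval [Fintype σ] [DecidableEq τ] (f : σ → MvPolynomial τ R)
    (p : MvPolynomial σ R) (j : τ) :
    coeff (Finsupp.single j 1) (aeval f p) =
      ∑ i, eval (fun i => constantCoeff (f i)) (pderiv i p) *
        coeff (Finsupp.single j 1) (f i) := by
  have h (q : MvPolynomial τ R) : coeff (Finsupp.single j 1) q = constantCoeff (pderiv j q) := by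
    simp [constantCoeff_eq, coeff_pderiv]
  simp only [h, pderiv_aeval, map_sum, map_mul, constantCoeff_aeval]

lemma degree_erase_add (i : σ) (d : σ →₀ ℕ) : (d.erase i).degree + d i = d.degree := by
  conv_rhs => rw [← Finsupp.erase_add_single i d, map_add, Finsupp.degree_single]

lemma monomial_eq_monomial_erase_mul_X_pow (i : σ) (d : σ →₀ ℕ) (c : R) :
    monomial d c = monomial (d.erase i) c * X i ^ d i := by
  rw [X_pow_eq_monomial, monomial_mul, mul_one, Finsupp.erase_add_single]

/-- `divDiff i s r` is `(s - s[X i := r]) / (X i - r)`, computed monomial by monomial from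
`x ^ n - y ^ n = (x - y) * ∑ k < n, x ^ k * y ^ (n - 1 - k)`. -/
noncomputable def divDiff (i : σ) (s r : MvPolynomial σ R) : MvPolynomial σ R :=
  ∑ d ∈ s.support, monomial (d.erase i) (s.coeff d) *
    ∑ k ∈ range (d i), X i ^ k * r ^ (d i - 1 - k)

lemma aeval_update_monomial [DecidableEq σ] (i : σ) (r : MvPolynomial σ R) (d : σ →₀ ℕ)
    (c : R) :
    aeval (Function.update X i r) (monomial d c) = monomial (d.erase i) c * r ^ d i := by
  rw [monomial_eq_monomial_erase_mul_X_pow i, map_mul, map_pow, aeval_X, Function.update_self]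
  congr 1
  rw [aeval_monomial, monomial_eq, C_eq_algebraMap]
  congr 1
  refine Finsupp.prod_congr fun j hj => ?_
  rw [Function.update_of_ne (by rintro rfl; simp at hj)]

lemma X_sub_mul_divDiff [DecidableEq σ] (i : σ) (s r : MvPolynomial σ R) :
    (X i - r) * divDiff i s r = s - aeval (Function.update X i r) s := by
  conv_rhs => rw [s.as_sum, map_sum, ← sum_sub_distrib]
  rw [divDiff, mul_sum]
  refine sum_congr rfl fun d _ => ?_
  rw [aeval_update_monomial, monomial_eq_monomial_erase_mul_X_pow i d]
  linear_combination monomial (d.erase i) (s.coeff d) * geom_sum₂_mul (X i) r (d i)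

lemma sub_mul_eval_divDiff [DecidableEq σ] (i : σ) (s r : MvPolynomial σ R) (v : σ → R) :
    (v i - eval v r) * eval v (divDiff i s r) =
      eval v s - eval (Function.update v i (eval v r)) s := by
  have hupd : (fun j => eval v (Function.update X i r j)) = Function.update v i (eval v r) := by
    ext j
    rcases eq_or_ne j i with rfl | hj
    · simp
    · simp [Function.update_of_ne hj]
  have h := congrArg (eval v) (X_sub_mul_divDiff i s r)
  rwa [map_mul, map_sub, eval_X, map_sub, eval_aeval, hupd] at h

lemma constantCoeff_divDiff_zero [Fintype σ] [DecidableEq σ] (i : σ)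
    (s : MvPolynomial σ R) : constantCoeff (divDiff i s 0) = s.coeff (Finsupp.single i 1) := by
  have h := congrArg (coeff (Finsupp.single i 1)) (X_sub_mul_divDiff i s 0)
  have hvanish (j : σ) :
      coeff (Finsupp.single i 1) (Function.update (X : σ → MvPolynomial σ R) i 0 j) = 0 := by
    rcases eq_or_ne j i with rfl | hj
    · simp
    · rw [Function.update_of_ne hj, coeff_X, if_neg]
      exact fun h => hj (Finsupp.single_left_injective one_ne_zero h)
  rw [sub_zero, coeff_X_mul', if_pos (by simp), tsub_self, ← constantCoeff_eq, coeff_sub,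
    coeff_single_aeval] at h
  rwa [sum_eq_zero fun j _ => by rw [hvanish j, mul_zero], sub_zero] at h

lemma divDiff_mem_pow_idealOfVars (i : σ) {s r : MvPolynomial σ R} {n : ℕ}
    (hs : s ∈ idealOfVars σ R ^ (n + 1)) (hr : r ∈ idealOfVars σ R) :
    divDiff i s r ∈ idealOfVars σ R ^ n := by
  refine Ideal.sum_mem _ fun d hd => ?_
  have hdeg := (mem_pow_idealOfVars_iff _ _).1 hs d hd
  have hsum : ∑ k ∈ range (d i), X i ^ k * r ^ (d i - 1 - k) ∈ idealOfVars σ R ^ (d i - 1) := by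
    refine Ideal.sum_mem _ fun k hk => ?_
    have hk := mem_range.mp hk
    have hmem := Ideal.mul_mem_mul (Ideal.pow_mem_pow (X_mem_idealOfVars i) k)
      (Ideal.pow_mem_pow hr (d i - 1 - k))
    rwa [← pow_add, show k + (d i - 1 - k) = d i - 1 by omega] at hmem
  have hmem := Ideal.mul_mem_mul (monomial_mem_pow_idealOfVars (d.erase i) (s.coeff d)) hsum
  rw [← pow_add] at hmem
  have := degree_erase_add i d
  exact Ideal.pow_le_pow_right (by omega) hmem

lemma totalDegree_divDiff_le [Nontrivial R] (i : σ) (s r : MvPolynomial σ R) :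
    (divDiff i s r).totalDegree ≤ s.totalDegree * (1 + r.totalDegree) := by
  refine totalDegree_finsetSum_le fun d hd => (totalDegree_mul _ _).trans ?_
  have hd : d.degree ≤ s.totalDegree := le_totalDegree hd
  have herase := degree_erase_add i d
  have hsum : (∑ k ∈ range (d i), X i ^ k * r ^ (d i - 1 - k)).totalDegree ≤
      d i + d.degree * r.totalDegree := by
    refine totalDegree_finsetSum_le fun k hk => (totalDegree_mul _ _).trans ?_
    have hk := mem_range.mp hk
    refine add_le_add ((totalDegree_pow _ _).trans ?_) ((totalDegree_pow _ _).trans ?_)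
    · rw [totalDegree_X, mul_one]
      omega
    · exact Nat.mul_le_mul_right _ (by omega)
  have hmon : (monomial (d.erase i) (s.coeff d)).totalDegree ≤ (d.erase i).degree :=
    totalDegree_monomial_le _ _
  calc _ ≤ (d.erase i).degree + (d i + d.degree * r.totalDegree) := add_le_add hmon hsum
    _ ≤ s.totalDegree * (1 + r.totalDegree) := by
      rw [← add_assoc, herase, mul_add, mul_one]
      exact add_le_add hd (Nat.mul_le_mul_right _ hd)

end CommRing

noncomputable def l1Norm (p : MvPolynomial σ ℝ) : ℝ := ∑ d ∈ p.support, |p.coeff d|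

lemma l1Norm_eq_sum_of_support_subset {p : MvPolynomial σ ℝ} {s : Finset (σ →₀ ℕ)}
    (hs : p.support ⊆ s) : l1Norm p = ∑ d ∈ s, |p.coeff d| :=
  sum_subset hs fun d _ hd => by simp [notMem_support_iff.mp hd]

lemma l1Norm_nonneg (p : MvPolynomial σ ℝ) : 0 ≤ l1Norm p :=
  sum_nonneg fun _ _ => abs_nonneg _

lemma abs_coeff_le_l1Norm (p : MvPolynomial σ ℝ) (d : σ →₀ ℕ) : |p.coeff d| ≤ l1Norm p := by
  by_cases h : d ∈ p.support
  · exact single_le_sum (f := fun d => |p.coeff d|) (fun _ _ => abs_nonneg _) h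
  · simp [notMem_support_iff.mp h, l1Norm_nonneg]

@[simp]
lemma l1Norm_monomial (d : σ →₀ ℕ) (c : ℝ) : l1Norm (monomial d c) = |c| := by
  classical
  rcases eq_or_ne c 0 with rfl | hc
  · simp [l1Norm]
  · simp [l1Norm, support_monomial, hc]

@[simp]
lemma l1Norm_C (c : ℝ) : l1Norm (C c : MvPolynomial σ ℝ) = |c| := l1Norm_monomial 0 c

@[simp]
lemma l1Norm_zero : l1Norm (0 : MvPolynomial σ ℝ) = 0 := by simpa using l1Norm_C (σ := σ) 0

@[simp]
lemma l1Norm_one : l1Norm (1 : MvPolynomial σ ℝ) = 1 := by simpa using l1Norm_C (σ := σ) 1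

@[simp]
lemma l1Norm_X (i : σ) : l1Norm (X i : MvPolynomial σ ℝ) = 1 := by
  rw [X, l1Norm_monomial, abs_one]

@[simp]
lemma l1Norm_neg (p : MvPolynomial σ ℝ) : l1Norm (-p) = l1Norm p := by
  simp [l1Norm, support_neg]

lemma l1Norm_add_le (p q : MvPolynomial σ ℝ) : l1Norm (p + q) ≤ l1Norm p + l1Norm q := by
  classical
  rw [l1Norm_eq_sum_of_support_subset support_add,
    l1Norm_eq_sum_of_support_subset (s := p.support ∪ q.support) subset_union_left,
    l1Norm_eq_sum_of_support_subset (s := p.support ∪ q.support) subset_union_right,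
    ← sum_add_distrib]
  exact sum_le_sum fun d _ => by simpa only [coeff_add] using abs_add_le _ _

lemma l1Norm_sum_le {α : Type*} (s : Finset α) (f : α → MvPolynomial σ ℝ) :
    l1Norm (∑ a ∈ s, f a) ≤ ∑ a ∈ s, l1Norm (f a) :=
  le_sum_of_subadditive _ l1Norm_zero.le l1Norm_add_le s f

lemma l1Norm_monomial_mul (d : σ →₀ ℕ) (c : ℝ) (p : MvPolynomial σ ℝ) :
    l1Norm (monomial d c * p) = |c| * l1Norm p := by
  classical
  have hsupp : (monomial d c * p).support ⊆ p.support.image (d + ·) := by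
    intro e he
    obtain ⟨e₁, he₁, e₂, he₂, rfl⟩ := mem_add.mp (support_mul _ _ he)
    obtain rfl : e₁ = d := by simpa using support_monomial_subset he₁
    exact mem_image_of_mem _ he₂
  rw [l1Norm_eq_sum_of_support_subset hsupp, sum_image fun _ _ _ _ h => add_left_cancel h,
    l1Norm, mul_sum]
  simp [coeff_monomial_mul, abs_mul]

lemma l1Norm_C_mul (c : ℝ) (p : MvPolynomial σ ℝ) : l1Norm (C c * p) = |c| * l1Norm p :=
  l1Norm_monomial_mul 0 c p

lemma l1Norm_mul_le (p q : MvPolynomial σ ℝ) : l1Norm (p * q) ≤ l1Norm p * l1Norm q := by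
  conv_lhs => rw [p.as_sum, sum_mul]
  refine (l1Norm_sum_le _ _).trans ?_
  rw [l1Norm, sum_mul]
  exact sum_le_sum fun d _ => (l1Norm_monomial_mul d _ q).le

lemma l1Norm_prod_le {α : Type*} (s : Finset α) (f : α → MvPolynomial σ ℝ) :
    l1Norm (∏ a ∈ s, f a) ≤ ∏ a ∈ s, l1Norm (f a) := by
  classical
  induction s using Finset.induction_on with
  | empty => simp
  | insert a s ha ih =>
    rw [prod_insert ha, prod_insert ha]
    exact (l1Norm_mul_le _ _).trans (mul_le_mul_of_nonneg_left ih (l1Norm_nonneg _))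

lemma l1Norm_pow_le (p : MvPolynomial σ ℝ) (n : ℕ) : l1Norm (p ^ n) ≤ l1Norm p ^ n := by
  simpa using l1Norm_prod_le (range n) fun _ => p

lemma abs_eval_le_l1Norm [Fintype σ] {x : σ → ℝ} (hx : ∀ i, |x i| ≤ 1)
    (p : MvPolynomial σ ℝ) : |eval x p| ≤ l1Norm p := by
  rw [eval_eq']
  refine (abs_sum_le_sum_abs _ _).trans (sum_le_sum fun d _ => ?_)
  rw [abs_mul, abs_prod]
  refine mul_le_of_le_one_right (abs_nonneg _) (prod_le_one (fun _ _ => abs_nonneg _) fun i _ => ?_)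
  exact abs_pow (x i) (d i) ▸ pow_le_one₀ (abs_nonneg _) (hx i)

lemma l1Norm_aeval_le (f : σ → MvPolynomial τ ℝ) (p : MvPolynomial σ ℝ) {B : ℝ} (hB : 1 ≤ B)
    (hf : ∀ i, l1Norm (f i) ≤ B) : l1Norm (aeval f p) ≤ l1Norm p * B ^ p.totalDegree := by
  conv_lhs => rw [p.as_sum, map_sum]
  refine (l1Norm_sum_le _ _).trans ?_
  rw [l1Norm, sum_mul]
  refine sum_le_sum fun d hd => ?_
  rw [aeval_monomial, ← C_eq_algebraMap, l1Norm_C_mul]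
  refine mul_le_mul_of_nonneg_left ?_ (abs_nonneg _)
  calc l1Norm (d.prod fun i k => f i ^ k) ≤ ∏ i ∈ d.support, l1Norm (f i) ^ d i :=
        (l1Norm_prod_le _ _).trans (prod_le_prod (fun _ _ => l1Norm_nonneg _)
          fun i _ => l1Norm_pow_le _ _)
    _ ≤ ∏ i ∈ d.support, B ^ d i :=
        prod_le_prod (fun i _ => pow_nonneg (l1Norm_nonneg (f i)) _)
          fun i _ => pow_le_pow_left₀ (l1Norm_nonneg _) (hf i) _
    _ = B ^ d.degree := by rw [prod_pow_eq_pow_sum, Finsupp.degree_apply]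
    _ ≤ B ^ p.totalDegree := pow_le_pow_right₀ hB (le_totalDegree hd)

lemma l1Norm_rename_le (g : σ → τ) (p : MvPolynomial σ ℝ) : l1Norm (rename g p) ≤ l1Norm p := by
  have h := l1Norm_aeval_le (X ∘ g) p le_rfl (by simp)
  rwa [one_pow, mul_one, ← rename_eq_aeval] at h

lemma l1Norm_divDiff_le (i : σ) (s : MvPolynomial σ ℝ) {r : MvPolynomial σ ℝ} {B : ℝ}
    (hB : 1 ≤ B) (hr : l1Norm r ≤ B) :
    l1Norm (divDiff i s r) ≤ l1Norm s * (s.totalDegree * B ^ s.totalDegree) := by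
  refine (l1Norm_sum_le _ _).trans ?_
  rw [l1Norm, sum_mul]
  refine sum_le_sum fun d hd => ?_
  rw [l1Norm_monomial_mul]
  refine mul_le_mul_of_nonneg_left ?_ (abs_nonneg _)
  have hdi : d i ≤ s.totalDegree := (Finsupp.le_degree i d).trans (le_totalDegree hd)
  have hterm (k : ℕ) (hk : k ∈ range (d i)) :
      l1Norm (X i ^ k * r ^ (d i - 1 - k)) ≤ B ^ s.totalDegree := by
    calc l1Norm (X i ^ k * r ^ (d i - 1 - k)) ≤ l1Norm (X i) ^ k * l1Norm r ^ (d i - 1 - k) :=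
          (l1Norm_mul_le _ _).trans (mul_le_mul (l1Norm_pow_le _ _) (l1Norm_pow_le _ _)
            (l1Norm_nonneg _) (by simp))
      _ ≤ B ^ s.totalDegree := by
          rw [l1Norm_X, one_pow, one_mul]
          exact (pow_le_pow_left₀ (l1Norm_nonneg _) hr _).trans
            (pow_le_pow_right₀ hB (by omega))
  calc l1Norm (∑ k ∈ range (d i), X i ^ k * r ^ (d i - 1 - k))
        ≤ ∑ k ∈ range (d i), B ^ s.totalDegree := (l1Norm_sum_le _ _).trans (sum_le_sum hterm)
    _ ≤ s.totalDegree * B ^ s.totalDegree := by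
        rw [sum_const, card_range, nsmul_eq_mul]
        exact mul_le_mul_of_nonneg_right (by exact_mod_cast hdi) (by positivity)

def UniformlyBounded (f : ι → MvPolynomial σ ℝ) : Prop :=
  ∃ D : ℕ, ∃ H : ℝ, ∀ i, (f i).totalDegree ≤ D ∧ l1Norm (f i) ≤ H

lemma uniformlyBounded_const (p : MvPolynomial σ ℝ) : UniformlyBounded fun _ : ι => p :=
  ⟨_, _, fun _ => ⟨le_rfl, le_rfl⟩⟩

lemma uniformlyBounded_C {a : ι → ℝ} {B : ℝ} (ha : ∀ i, |a i| ≤ B) :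
    UniformlyBounded fun i => (C (a i) : MvPolynomial σ ℝ) :=
  ⟨0, B, fun i => by simp [ha i]⟩

namespace UniformlyBounded

variable {f g : ι → MvPolynomial σ ℝ}

lemma add (hf : UniformlyBounded f) (hg : UniformlyBounded g) :
    UniformlyBounded fun i => f i + g i := by
  obtain ⟨D₁, H₁, h₁⟩ := hf
  obtain ⟨D₂, H₂, h₂⟩ := hg
  exact ⟨max D₁ D₂, H₁ + H₂, fun i =>
    ⟨(totalDegree_add _ _).trans (max_le_max (h₁ i).1 (h₂ i).1),
      (l1Norm_add_le _ _).trans (add_le_add (h₁ i).2 (h₂ i).2)⟩⟩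

lemma neg (hf : UniformlyBounded f) : UniformlyBounded fun i => -f i := by
  simpa [UniformlyBounded] using hf

lemma sub (hf : UniformlyBounded f) (hg : UniformlyBounded g) :
    UniformlyBounded fun i => f i - g i := by
  simpa [sub_eq_add_neg] using hf.add hg.neg

lemma mul (hf : UniformlyBounded f) (hg : UniformlyBounded g) :
    UniformlyBounded fun i => f i * g i := by
  obtain ⟨D₁, H₁, h₁⟩ := hf
  obtain ⟨D₂, H₂, h₂⟩ := hg
  exact ⟨D₁ + D₂, H₁ * H₂, fun i =>
    ⟨(totalDegree_mul _ _).trans (add_le_add (h₁ i).1 (h₂ i).1),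
      (l1Norm_mul_le _ _).trans (mul_le_mul (h₁ i).2 (h₂ i).2 (l1Norm_nonneg _)
        ((l1Norm_nonneg _).trans (h₁ i).2))⟩⟩

lemma prod {α : Type*} (s : Finset α) {f : α → ι → MvPolynomial σ ℝ}
    (hf : ∀ a ∈ s, UniformlyBounded (f a)) : UniformlyBounded fun i => ∏ a ∈ s, f a i := by
  classical
  induction s using Finset.induction_on with
  | empty => simpa using uniformlyBounded_const 1
  | insert a s ha ih =>
    simp_rw [prod_insert ha]
    exact (hf a (mem_insert_self a s)).mul (ih fun b hb => hf b (mem_insert_of_mem hb))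

lemma rename (g : σ → τ) (hf : UniformlyBounded f) :
    UniformlyBounded fun i => rename g (f i) := by
  obtain ⟨D, H, h⟩ := hf
  exact ⟨D, H, fun i => ⟨(totalDegree_rename_le _ _).trans (h i).1,
    (l1Norm_rename_le _ _).trans (h i).2⟩⟩

lemma aeval [Fintype σ] {v : ι → σ → MvPolynomial τ ℝ}
    (hv : ∀ j, UniformlyBounded fun i => v i j) (hf : UniformlyBounded f) :
    UniformlyBounded fun i => aeval (v i) (f i) := by
  choose D H h using hv
  obtain ⟨Df, Hf, hf⟩ := hf
  have hB : 1 ≤ 1 + ∑ j, |H j| := le_add_of_nonneg_right (sum_nonneg fun _ _ => abs_nonneg _)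
  refine ⟨Df * ∑ j, D j, Hf * (1 + ∑ j, |H j|) ^ Df, fun i => ⟨?_, ?_⟩⟩
  · refine (totalDegree_aeval_le _ _ fun j => (h j i).1.trans ?_).trans
      (Nat.mul_le_mul_right _ (hf i).1)
    exact single_le_sum (fun _ _ => Nat.zero_le _) (mem_univ j)
  · refine (l1Norm_aeval_le _ _ hB fun j => (h j i).2.trans ?_).trans ?_
    · exact (le_abs_self _).trans ((single_le_sum (f := fun j => |H j|)
        (fun _ _ => abs_nonneg _) (mem_univ j)).trans (le_add_of_nonneg_left zero_le_one))
    · exact mul_le_mul (hf i).2 (pow_le_pow_right₀ hB (hf i).1) (by positivity)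
        ((l1Norm_nonneg _).trans (hf i).2)

lemma divDiff (j : σ) (hf : UniformlyBounded f) (hg : UniformlyBounded g) :
    UniformlyBounded fun i => divDiff j (f i) (g i) := by
  obtain ⟨D₁, H₁, h₁⟩ := hf
  obtain ⟨D₂, H₂, h₂⟩ := hg
  have hB : 1 ≤ max 1 H₂ := le_max_left _ _
  refine ⟨D₁ * (1 + D₂), H₁ * (D₁ * max 1 H₂ ^ D₁), fun i => ⟨?_, ?_⟩⟩
  · exact (totalDegree_divDiff_le _ _ _).trans
      (Nat.mul_le_mul (h₁ i).1 (Nat.add_le_add_left (h₂ i).1 1))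
  · refine (l1Norm_divDiff_le _ _ hB ((h₂ i).2.trans (le_max_right _ _))).trans ?_
    refine mul_le_mul (h₁ i).2 (mul_le_mul (by exact_mod_cast (h₁ i).1)
      (pow_le_pow_right₀ hB (h₁ i).1) (by positivity) (by positivity)) (by positivity)
      ((l1Norm_nonneg _).trans (h₁ i).2)

end UniformlyBounded

/-! Polynomials in `(u₁, u₂, w)` live in `MvPolynomial (Fin 3) ℝ` and polynomials in
`(u₁, u₂, u₃, w)` in `MvPolynomial (Fin 4) ℝ`; `rename (Fin.succAbove 2)` embeds the former into
the latter. -/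

section Picard

variable {Φ : MvPolynomial (Fin 3) ℝ} {Ψ : MvPolynomial (Fin 4) ℝ}

noncomputable def picardIter (Φ : MvPolynomial (Fin 3) ℝ) (Ψ : MvPolynomial (Fin 4) ℝ) :
    ℕ → MvPolynomial (Fin 3) ℝ
  | 0 => 0
  | j + 1 => Φ + aeval ![X 0, X 1, picardIter Φ Ψ j, X 2] Ψ * picardIter Φ Ψ j

noncomputable def picardQuot (Φ : MvPolynomial (Fin 3) ℝ) (Ψ : MvPolynomial (Fin 4) ℝ)
    (j : ℕ) : MvPolynomial (Fin 4) ℝ :=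
  divDiff 2 (X 2 * Ψ) (rename (Fin.succAbove 2) (picardIter Φ Ψ j))

lemma sub_eval_picardIter {u₁ u₂ y w : ℝ}
    (h : y = eval ![u₁, u₂, w] Φ + y * eval ![u₁, u₂, y, w] Ψ) (j : ℕ) :
    y - eval ![u₁, u₂, w] (picardIter Φ Ψ j) =
      y * ∏ k ∈ range j, eval ![u₁, u₂, y, w] (picardQuot Φ Ψ k) := by
  induction j with
  | zero => simp [picardIter]
  | succ j ih =>
    set ξ := eval ![u₁, u₂, w] (picardIter Φ Ψ j)
    have hstep : eval ![u₁, u₂, w] (picardIter Φ Ψ (j + 1)) =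
        eval ![u₁, u₂, w] Φ + eval ![u₁, u₂, ξ, w] Ψ * ξ := by
      have hv : (fun i => eval ![u₁, u₂, w] (![X 0, X 1, picardIter Φ Ψ j, X 2] i)) =
          ![u₁, u₂, ξ, w] := by
        ext i
        fin_cases i <;> simp [ξ]
      rw [picardIter, map_add, map_mul, eval_aeval, hv]
    have hquot := sub_mul_eval_divDiff 2 (X 2 * Ψ) (rename (Fin.succAbove 2) (picardIter Φ Ψ j))
      ![u₁, u₂, y, w]
    have hlift : eval ![u₁, u₂, y, w] (rename (Fin.succAbove 2) (picardIter Φ Ψ j)) = ξ := by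
      have hv : ![u₁, u₂, y, w] ∘ Fin.succAbove 2 = ![u₁, u₂, w] := by
        ext i
        fin_cases i <;> rfl
      rw [eval_rename, hv]
    have hupd : Function.update ![u₁, u₂, y, w] 2 ξ = ![u₁, u₂, ξ, w] := by
      ext i
      fin_cases i <;> rfl
    rw [hlift, hupd, map_mul, map_mul, eval_X, eval_X] at hquot
    change (y - ξ) * _ = y * _ - ξ * _ at hquot
    rw [prod_range_succ, hstep, ← mul_assoc, ← ih, picardQuot]
    linear_combination h - hquot

lemma constantCoeff_picardIter (hΦ : constantCoeff Φ = 0) (j : ℕ) :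
    constantCoeff (picardIter Φ Ψ j) = 0 := by
  induction j with
  | zero => simp [picardIter]
  | succ j ih => rw [picardIter, map_add, map_mul, ih, mul_zero, add_zero, hΦ]

lemma prod_picardQuot_mem_pow_idealOfVars (hΦ : constantCoeff Φ = 0)
    (hΨ : Ψ ∈ idealOfVars (Fin 4) ℝ) (m : ℕ) :
    ∏ k ∈ range m, picardQuot Φ Ψ k ∈ idealOfVars (Fin 4) ℝ ^ m := by
  have hquot (k : ℕ) : picardQuot Φ Ψ k ∈ idealOfVars (Fin 4) ℝ := by
    refine pow_one (idealOfVars (Fin 4) ℝ) ▸ divDiff_mem_pow_idealOfVars 2 ?_ ?_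
    · exact pow_two (idealOfVars (Fin 4) ℝ) ▸ Ideal.mul_mem_mul (X_mem_idealOfVars 2) hΨ
    · rw [mem_idealOfVars_iff, constantCoeff_rename, constantCoeff_picardIter hΦ]
  simpa using Ideal.prod_mem_prod (s := range m) fun k _ => hquot k

end Picard

section PicardFamily

variable {Φ : ι → MvPolynomial (Fin 3) ℝ} {Ψ : ι → MvPolynomial (Fin 4) ℝ}

lemma UniformlyBounded.picardIter (hΦ : UniformlyBounded Φ) (hΨ : UniformlyBounded Ψ)
    (j : ℕ) : UniformlyBounded fun i => picardIter (Φ i) (Ψ i) j := by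
  induction j with
  | zero => exact uniformlyBounded_const 0
  | succ j ih =>
    refine hΦ.add ((UniformlyBounded.aeval (fun k => ?_) hΨ).mul ih)
    fin_cases k
    exacts [uniformlyBounded_const _, uniformlyBounded_const _, ih, uniformlyBounded_const _]

lemma UniformlyBounded.picardQuot (hΦ : UniformlyBounded Φ) (hΨ : UniformlyBounded Ψ)
    (j : ℕ) : UniformlyBounded fun i => picardQuot (Φ i) (Ψ i) j :=
  ((uniformlyBounded_const _).mul hΨ).divDiff 2 ((hΦ.picardIter hΨ j).rename _)

end PicardFamily

section Seed

/-- In `seedPhi G` the variable `X 2` is `w`; `G(u₁, u₂, 0)` does not involve it. -/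
noncomputable def seedPhi (G : MvPolynomial (Fin 3) ℝ) : MvPolynomial (Fin 3) ℝ :=
  C (G.coeff (Finsupp.single 2 1))⁻¹ * (X 2 - aeval (Function.update X 2 0) G)

noncomputable def seedPsi (G : MvPolynomial (Fin 3) ℝ) : MvPolynomial (Fin 4) ℝ :=
  rename Fin.castSucc (1 - C (G.coeff (Finsupp.single 2 1))⁻¹ * divDiff 2 G 0)

variable {G : MvPolynomial (Fin 3) ℝ}

lemma eq_eval_seed (u : Fin 3 → ℝ) :
    u 2 = eval ![u 0, u 1, eval u G] (seedPhi G) +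
      u 2 * eval ![u 0, u 1, u 2, eval u G] (seedPsi G) := by
  have hsplit := sub_mul_eval_divDiff 2 G 0 u
  have hΦ : (fun i => eval ![u 0, u 1, eval u G] (Function.update X 2 0 i)) =
      Function.update u 2 0 := by
    ext i
    fin_cases i <;> simp
  have hΨ : ![u 0, u 1, u 2, eval u G] ∘ Fin.castSucc = u := by
    ext i
    fin_cases i <;> rfl
  rw [map_zero, sub_zero] at hsplit
  simp only [seedPhi, seedPsi, map_mul, map_sub, map_one, eval_C, eval_X, eval_aeval, hΦ,
    eval_rename, hΨ]
  change u 2 = _ * (eval u G - _) + _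
  linear_combination (G.coeff (Finsupp.single 2 1))⁻¹ * hsplit

lemma constantCoeff_seedPhi (hG : constantCoeff G = 0) : constantCoeff (seedPhi G) = 0 := by
  have h : (fun i => constantCoeff
      (Function.update (X : Fin 3 → MvPolynomial (Fin 3) ℝ) 2 0 i)) = 0 := by
    ext i
    fin_cases i <;> simp
  rw [seedPhi, map_mul, map_sub, constantCoeff_aeval, h, eval_zero, hG]
  simp

lemma seedPsi_mem_idealOfVars (hG : G.coeff (Finsupp.single 2 1) ≠ 0) :
    seedPsi G ∈ idealOfVars (Fin 4) ℝ := by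
  rw [mem_idealOfVars_iff, seedPsi, constantCoeff_rename, map_sub, map_mul,
    constantCoeff_divDiff_zero, constantCoeff_C, map_one, inv_mul_cancel₀ hG, sub_self]

end Seed

theorem exists_uniform_implicit_expansion {G : ι → MvPolynomial (Fin 3) ℝ}
    (hG : UniformlyBounded G) (hG₀ : ∀ i, constantCoeff (G i) = 0) {c : ℝ} (hc : 0 < c)
    (hlin : ∀ i, c ≤ |(G i).coeff (Finsupp.single 2 1)|) (m : ℕ) :
    ∃ (D : ℕ) (H : ℝ), ∀ i, ∃ (Φ : MvPolynomial (Fin 3) ℝ) (Ψ : MvPolynomial (Fin 4) ℝ),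
      constantCoeff Φ = 0 ∧ Ψ ∈ idealOfVars (Fin 4) ℝ ^ m ∧
      Φ.totalDegree ≤ D ∧ Ψ.totalDegree ≤ D ∧ l1Norm Φ ≤ H ∧ l1Norm Ψ ≤ H ∧
      ∀ u : Fin 3 → ℝ, u 2 = eval ![u 0, u 1, eval u (G i)] Φ +
        u 2 * eval ![u 0, u 1, u 2, eval u (G i)] Ψ := by
  have hL (i : ι) : (G i).coeff (Finsupp.single 2 1) ≠ 0 :=
    abs_pos.mp (hc.trans_le (hlin i))
  have hLinv : UniformlyBounded fun i =>
      (C ((G i).coeff (Finsupp.single 2 1))⁻¹ : MvPolynomial (Fin 3) ℝ) :=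
    uniformlyBounded_C fun i => (abs_inv _).trans_le (inv_anti₀ hc (hlin i))
  have hΦ : UniformlyBounded fun i => seedPhi (G i) :=
    hLinv.mul ((uniformlyBounded_const _).sub
      (UniformlyBounded.aeval (fun _ => uniformlyBounded_const _) hG))
  have hΨ : UniformlyBounded fun i => seedPsi (G i) :=
    ((uniformlyBounded_const 1).sub (hLinv.mul (hG.divDiff 2 (uniformlyBounded_const 0)))).rename _
  obtain ⟨D₁, H₁, h₁⟩ := hΦ.picardIter hΨ m
  obtain ⟨D₂, H₂, h₂⟩ := UniformlyBounded.prod (range m) fun k _ => hΦ.picardQuot hΨ k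
  refine ⟨max D₁ D₂, max H₁ H₂, fun i => ⟨picardIter (seedPhi (G i)) (seedPsi (G i)) m,
    ∏ k ∈ range m, picardQuot (seedPhi (G i)) (seedPsi (G i)) k,
    constantCoeff_picardIter (constantCoeff_seedPhi (hG₀ i)) m,
    prod_picardQuot_mem_pow_idealOfVars (constantCoeff_seedPhi (hG₀ i))
      (seedPsi_mem_idealOfVars (hL i)) m,
    le_max_of_le_left (h₁ i).1, le_max_of_le_right (h₂ i).1,
    le_max_of_le_left (h₁ i).2, le_max_of_le_right (h₂ i).2, fun u => ?_⟩⟩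
  have := sub_eval_picardIter (eq_eval_seed (G := G i) u) m
  rw [map_prod]
  linarith

section Dehomogenization

/-- `dehomogIncrement P a` is `P(a + u, 1) - P(a, 1)` as a polynomial in `u`. -/
noncomputable def dehomogIncrement (P : MvPolynomial (Fin 4) ℝ) (a : Fin 3 → ℝ) :
    MvPolynomial (Fin 3) ℝ :=
  aeval (Fin.snoc (fun j => C (a j) + X j) 1) P - C (eval (Fin.snoc a 1) P)

variable (P : MvPolynomial (Fin 4) ℝ)

lemma eval_dehomogIncrement (a t : Fin 3 → ℝ) :
    eval (t - a) (dehomogIncrement P a) = eval (Fin.snoc t 1) P - eval (Fin.snoc a 1) P := by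
  have hv : (fun i => eval (t - a)
      ((Fin.snoc (fun j => C (a j) + X j) 1 : Fin 4 → MvPolynomial (Fin 3) ℝ) i)) =
      Fin.snoc t 1 := by
    ext i
    refine Fin.lastCases ?_ (fun j => ?_) i
    · simp only [Fin.snoc_last, map_one]
    · simp
  rw [dehomogIncrement, map_sub, eval_aeval, hv, eval_C]

lemma constantCoeff_dehomogIncrement (a : Fin 3 → ℝ) :
    constantCoeff (dehomogIncrement P a) = 0 := by
  simpa [← eval_zero] using eval_dehomogIncrement P a a

lemma coeff_single_dehomogIncrement (a : Fin 3 → ℝ) (j : Fin 3) :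
    (dehomogIncrement P a).coeff (Finsupp.single j 1) =
      eval (Fin.snoc a 1) (pderiv j.castSucc P) := by
  have hcc : (fun i => constantCoeff
      ((Fin.snoc (fun j => C (a j) + X j) 1 : Fin 4 → MvPolynomial (Fin 3) ℝ) i)) =
      Fin.snoc a 1 := by
    ext i
    refine Fin.lastCases ?_ (fun j => ?_) i
    · simp only [Fin.snoc_last, map_one]
    · simp
  have h0 : (0 : Fin 3 →₀ ℕ) ≠ Finsupp.single j 1 :=
    (Finsupp.single_ne_zero.mpr one_ne_zero).symm
  rw [dehomogIncrement, coeff_sub, coeff_C, if_neg h0, sub_zero, coeff_single_aeval,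
    Fin.sum_univ_castSucc, hcc]
  simp only [Fin.snoc_castSucc, Fin.snoc_last]
  simp [coeff_X, coeff_C, coeff_one, h0, Finsupp.single_left_inj]

lemma uniformlyBounded_dehomogIncrement {a : ι → Fin 3 → ℝ} (ha : ∀ i j, |a i j| ≤ 1) :
    UniformlyBounded fun i => dehomogIncrement P (a i) := by
  have hsnoc (i : ι) (k : Fin 4) : |(Fin.snoc (a i) 1 : Fin 4 → ℝ) k| ≤ 1 := by
    refine Fin.lastCases ?_ (fun j => ?_) k
    · rw [Fin.snoc_last, abs_one]
    · rw [Fin.snoc_castSucc]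
      exact ha i j
  refine (UniformlyBounded.aeval (fun k => ?_) (uniformlyBounded_const P)).sub
    (uniformlyBounded_C fun i => abs_eval_le_l1Norm (hsnoc i) P)
  refine Fin.lastCases ?_ (fun j => ?_) k
  · simp only [Fin.snoc_last]
    exact uniformlyBounded_const 1
  · simp only [Fin.snoc_castSucc]
    exact (uniformlyBounded_C (B := 1) fun i => ha i j).add (uniformlyBounded_const (X j))

end Dehomogenization

end MvPolynomial

lemma abs_neg_one_add_div_le_one {n N : ℕ} (h : n < 2 * N) : |-1 + (n : ℝ) / N| ≤ 1 := by
  have hN : (0 : ℝ) < N := by exact_mod_cast (by omega : 0 < N)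
  have hn : (n : ℝ) ≤ 2 * N := by exact_mod_cast h.le
  have h₀ : 0 ≤ (n : ℝ) / N := by positivity
  have h₂ : (n : ℝ) / N ≤ 2 := (div_le_iff₀ hN).2 (by linarith)
  rw [abs_le]
  constructor <;> linarith

open MvPolynomial

theorem stmt7_general (F : MvPolynomial (Fin 4) ℤ)
    (M₀ : ℕ) (c : ℝ) (hc : 0 < c) (m : ℕ) :
    ∃ (D : ℕ) (H : ℝ), ∀ (M : ℕ), 0 < M → ∀ a : Fin 3 → ℝ,
      (∃ mi : Fin 3 → ℕ, (∀ j, mi j < 2 * M₀ * M) ∧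
        ∀ j, a j = -1 + (mi j : ℝ) / ((M₀ : ℝ) * M)) →
      (∃ t : Fin 3 → ℝ,
        (∀ j, a j ≤ t j ∧ t j ≤ a j + 1 / ((M₀ : ℝ) * M)) ∧
        |eval (Fin.snoc t 1) (map (Int.castRingHom ℝ) F)| ≤ 1 / ((M₀ : ℝ) * M)) →
      c ≤ |eval (Fin.snoc a 1) (map (Int.castRingHom ℝ) (pderiv 2 F))| →
      ∃ (Φ : MvPolynomial (Fin 3) ℝ) (Ψ : MvPolynomial (Fin 4) ℝ),
        Φ.coeff 0 = 0 ∧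
        (∀ d ∈ Ψ.support, m ≤ d.sum fun _ e => e) ∧
        Φ.totalDegree ≤ D ∧ Ψ.totalDegree ≤ D ∧
        (∀ d, |Φ.coeff d| ≤ H) ∧ (∀ d, |Ψ.coeff d| ≤ H) ∧
        ∀ t : Fin 3 → ℝ, (∀ j, a j ≤ t j ∧ t j ≤ a j + 1 / ((M₀ : ℝ) * M)) →
          t 2 - a 2 =
            eval ![t 0 - a 0, t 1 - a 1,
                eval (Fin.snoc t 1) (map (Int.castRingHom ℝ) F) -
                eval (Fin.snoc a 1) (map (Int.castRingHom ℝ) F)] Φ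
            + (t 2 - a 2) *
              eval ![t 0 - a 0, t 1 - a 1, t 2 - a 2,
                eval (Fin.snoc t 1) (map (Int.castRingHom ℝ) F) -
                eval (Fin.snoc a 1) (map (Int.castRingHom ℝ) F)] Ψ := by
  obtain ⟨D, H, hDH⟩ := exists_uniform_implicit_expansion
    (G := fun a : {a : Fin 3 → ℝ // (∀ j, |a j| ≤ 1) ∧
      c ≤ |eval (Fin.snoc a 1) (map (Int.castRingHom ℝ) (pderiv 2 F))|} =>
        dehomogIncrement (map (Int.castRingHom ℝ) F) a.1)
    (uniformlyBounded_dehomogIncrement _ fun a => a.2.1)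
    (fun a => constantCoeff_dehomogIncrement _ _) hc
    (fun a => by rw [coeff_single_dehomogIncrement, pderiv_map]; exact a.2.2) m
  refine ⟨D, H, fun M _ a ⟨mi, hmi, ha⟩ _ hpd => ?_⟩
  have ha₁ (j : Fin 3) : |a j| ≤ 1 := by
    have := abs_neg_one_add_div_le_one ((hmi j).trans_eq (mul_assoc 2 M₀ M))
    rwa [Nat.cast_mul, ← ha j] at this
  obtain ⟨Φ, Ψ, hΦ₀, hΨ, hΦD, hΨD, hΦH, hΨH, hid⟩ := hDH ⟨a, ha₁, hpd⟩
  refine ⟨Φ, Ψ, by rwa [← constantCoeff_eq], (mem_pow_idealOfVars_iff _ _).1 hΨ, hΦD, hΨD,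
    fun d => (abs_coeff_le_l1Norm _ d).trans hΦH, fun d => (abs_coeff_le_l1Norm _ d).trans hΨH,
    fun t _ => ?_⟩
  simpa [eval_dehomogIncrement] using hid (t - a)

/-- Marmon, Lemma 2.2 (Heath-Brown's Lemma 2): let `F ∈ ℤ[x₁,…,x₄]` be a
nonsingular form of degree `k ≥ 3` and `M₀ ≥ 1` be the constant of the covering
lemma. Fix `c > 0` and `m ≥ 1`. Then there are `D = D(F,c,m)` and
`H = H(F,c,m)` such that for every `M ≥ 1` and every good partition cube
`S = ∏ⱼ [aⱼ, aⱼ + (M₀M)⁻¹] ⊆ [-1,1]³` (with corners `aⱼ = -1 + mⱼ/(M₀M)`,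
containing a point `t` with `|F(t,1)| ≤ (M₀M)⁻¹`, and with
`|∂F/∂x₃(a,1)| ≥ c`) there are polynomials `Φ(u₁,u₂,w)` with no constant term
and `Ψ(u₁,u₂,u₃,w)` with every term of degree at least `m`, of degree at most
`D` and coefficients of modulus at most `H`, such that throughout `S`, setting
`uⱼ = tⱼ - aⱼ` and `w = F(t,1) - F(a,1)`, one has
`u₃ = Φ(u₁,u₂,w) + u₃·Ψ(u₁,u₂,u₃,w)`. -/
theorem stmt7 (k : ℕ) (hk : 3 ≤ k) (F : MvPolynomial (Fin 4) ℤ)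
    (hhom : F.IsHomogeneous k)
    (hns : ∀ z : Fin 4 → ℂ,
      (∀ i : Fin 4, eval z (map (Int.castRingHom ℂ) (pderiv i F)) = 0) → z = 0)
    (M₀ : ℕ) (hM₀ : 0 < M₀) (c : ℝ) (hc : 0 < c) (m : ℕ) (hm : 0 < m) :
    ∃ (D : ℕ) (H : ℝ), ∀ (M : ℕ), 0 < M → ∀ a : Fin 3 → ℝ,
      (∃ mi : Fin 3 → ℕ, (∀ j, mi j < 2 * M₀ * M) ∧
        ∀ j, a j = -1 + (mi j : ℝ) / ((M₀ : ℝ) * M)) →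
      (∃ t : Fin 3 → ℝ,
        (∀ j, a j ≤ t j ∧ t j ≤ a j + 1 / ((M₀ : ℝ) * M)) ∧
        |eval (Fin.snoc t 1) (map (Int.castRingHom ℝ) F)| ≤ 1 / ((M₀ : ℝ) * M)) →
      c ≤ |eval (Fin.snoc a 1) (map (Int.castRingHom ℝ) (pderiv 2 F))| →
      ∃ (Φ : MvPolynomial (Fin 3) ℝ) (Ψ : MvPolynomial (Fin 4) ℝ),
        Φ.coeff 0 = 0 ∧
        (∀ d ∈ Ψ.support, m ≤ d.sum fun _ e => e) ∧
        Φ.totalDegree ≤ D ∧ Ψ.totalDegree ≤ D ∧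
        (∀ d, |Φ.coeff d| ≤ H) ∧ (∀ d, |Ψ.coeff d| ≤ H) ∧
        ∀ t : Fin 3 → ℝ, (∀ j, a j ≤ t j ∧ t j ≤ a j + 1 / ((M₀ : ℝ) * M)) →
          t 2 - a 2 =
            eval ![t 0 - a 0, t 1 - a 1,
                eval (Fin.snoc t 1) (map (Int.castRingHom ℝ) F) -
                eval (Fin.snoc a 1) (map (Int.castRingHom ℝ) F)] Φ
            + (t 2 - a 2) *
              eval ![t 0 - a 0, t 1 - a 1, t 2 - a 2,
                eval (Fin.snoc t 1) (map (Int.castRingHom ℝ) F) -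
                eval (Fin.snoc a 1) (map (Int.castRingHom ℝ) F)] Ψ :=
  stmt7_general F M₀ c hc m
end

section
/- Let n, D, H be positive integers and let X1, …, Xn be real numbers with 0 ≤ Xi ≤ 1. For a monomial m = x1^{α1}···xn^{αn} define its size ‖m‖ = X1^{α1}···Xn^{αn}, and let Π denote the supremum, over all sets of H pairwise distinct monomials in x1, …, xn, of the product of their sizes (i.e., the product of the H largest monomial sizes). Then there exists a constant C, depending only on n, H and D, such that for all polynomials f1, …, fH ∈ ℂ[x1,…,xn] of degree at most D and all points x^(1), …, x^(H) ∈ ℂⁿ with |x_i^(j)| ≤ Xi for all i and j, the determinant of the H × H matrix with entries f_i(x^(j)) has absolute value at most C · (max_j ‖f_j‖)^H · Π, where ‖f‖ denotes the maximum modulus of the coefficients of f. -/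
/-!
Expanding the determinant multilinearly in its rows writes it as a sum, over choices of one
monomial `x^{α_i}` of each `f_i`, of a product of `H` coefficients (each at most `‖f‖`) times the
generalized Vandermonde determinant `det (x^{(j)})^{α_i}`. That determinant vanishes unless the
`α_i` are distinct, and otherwise is at most `H! ∏ ‖x^{α_i}‖ ≤ H! Π`. Since a polynomial of
degree at most `D` has at most `(D + 1)^n` monomials, there are at most `(D + 1)^{nH}` terms.
-/

open Finset Matrix MvPolynomial Nat

theorem MvPolynomial.card_support_le_of_totalDegree_le {R σ : Type*} [CommSemiring R]
    [Fintype σ] {p : MvPolynomial σ R} {D : ℕ} (hp : p.totalDegree ≤ D) :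
    #p.support ≤ (D + 1) ^ Fintype.card σ := by
  classical
  calc #p.support
      ≤ #(Fintype.piFinset fun _ : σ => range (D + 1)) := by
        refine card_le_card_of_injOn (fun d => ⇑d) (fun d hd => ?_)
          DFunLike.coe_injective.injOn
        refine Fintype.mem_piFinset.2 fun i => mem_range_succ_iff.2 ?_
        exact (monomial_le_degreeOf i hd).trans ((degreeOf_le_totalDegree p i).trans hp)
    _ = (D + 1) ^ Fintype.card σ := by simp

theorem Matrix.det_of_sum_smul {R ι κ : Type*} [CommRing R] [Fintype ι] [DecidableEq ι]
    (s : ι → Finset κ) (c : ι → κ → R) (v : κ → ι → R) :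
    det (of fun i => ∑ d ∈ s i, c i d • v d)
      = ∑ r ∈ Fintype.piFinset s, (∏ i, c i (r i)) * det (of fun i => v (r i)) := by
  change detRowAlternating.toMultilinearMap (fun i => ∑ d ∈ s i, c i d • v d) = _
  rw [MultilinearMap.map_sum_finset]
  refine sum_congr rfl fun r _ => ?_
  rw [MultilinearMap.map_smul_univ, smul_eq_mul]
  rfl

theorem Matrix.norm_det_le_factorial_mul_prod {R ι : Type*} [NormedCommRing R] [NormOneClass R]
    [Fintype ι] [DecidableEq ι] (M : Matrix ι ι R) {b : ι → ℝ} (hM : ∀ i j, ‖M i j‖ ≤ b i) :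
    ‖M.det‖ ≤ (Fintype.card ι)! * ∏ i, b i := by
  have hperm : ∀ σ : Equiv.Perm ι, ‖Equiv.Perm.sign σ • ∏ i, M (σ i) i‖ ≤ ∏ i, b i := by
    intro σ
    calc ‖Equiv.Perm.sign σ • ∏ i, M (σ i) i‖ ≤ ∏ i, ‖M (σ i) i‖ := by
          rcases Int.units_eq_one_or (Equiv.Perm.sign σ) with h | h <;>
            simpa [h] using Finset.norm_prod_le _ _
      _ ≤ ∏ i, b (σ i) := prod_le_prod (fun _ _ => norm_nonneg _) fun i _ => hM _ _
      _ = ∏ i, b i := Equiv.prod_comp σ b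
  calc ‖M.det‖ ≤ ∑ σ : Equiv.Perm ι, ∏ i, b i := by
        rw [det_apply]; exact norm_sum_le_of_le _ fun σ _ => hperm σ
    _ = (Fintype.card ι)! * ∏ i, b i := by simp [Fintype.card_perm]

section MonomialSize

variable {σ : Type*} [Fintype σ]

def monomialSize (X : σ → ℝ) (d : σ →₀ ℕ) : ℝ := ∏ i, X i ^ d i

noncomputable def monomialSizeSup (X : σ → ℝ) (H : ℕ) : ℝ :=
  sSup {p : ℝ | ∃ s : Finset (σ →₀ ℕ), #s = H ∧ p = ∏ d ∈ s, monomialSize X d}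

variable {X : σ → ℝ}

theorem monomialSize_nonneg (hX : ∀ i, 0 ≤ X i) (d : σ →₀ ℕ) : 0 ≤ monomialSize X d :=
  prod_nonneg fun i _ => pow_nonneg (hX i) _

theorem monomialSize_le_one (hX : ∀ i, 0 ≤ X i ∧ X i ≤ 1) (d : σ →₀ ℕ) :
    monomialSize X d ≤ 1 :=
  prod_le_one (fun i _ => pow_nonneg (hX i).1 _) fun i _ => pow_le_one₀ (hX i).1 (hX i).2

theorem norm_prod_pow_le_monomialSize {𝕜 : Type*} [NormedField 𝕜] {x : σ → 𝕜}
    (hx : ∀ i, ‖x i‖ ≤ X i) (d : σ →₀ ℕ) : ‖∏ i, x i ^ d i‖ ≤ monomialSize X d := by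
  rw [norm_prod]
  exact prod_le_prod (fun _ _ => norm_nonneg _) fun i _ =>
    (norm_pow _ _).trans_le (pow_le_pow_left₀ (norm_nonneg _) (hx i) _)

theorem monomialSizeSup_nonneg (hX : ∀ i, 0 ≤ X i) (H : ℕ) : 0 ≤ monomialSizeSup X H := by
  refine Real.sSup_nonneg ?_
  rintro p ⟨s, -, rfl⟩
  exact prod_nonneg fun d _ => monomialSize_nonneg hX d

theorem prod_monomialSize_le_monomialSizeSup {ι : Type*} [Fintype ι]
    (hX : ∀ i, 0 ≤ X i ∧ X i ≤ 1) {r : ι → σ →₀ ℕ} (hr : Function.Injective r) :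
    ∏ i, monomialSize X (r i) ≤ monomialSizeSup X (Fintype.card ι) := by
  have hbdd : BddAbove {p : ℝ | ∃ s : Finset (σ →₀ ℕ), #s = Fintype.card ι ∧
      p = ∏ d ∈ s, monomialSize X d} := by
    refine ⟨1, ?_⟩
    rintro p ⟨s, -, rfl⟩
    exact prod_le_one (fun d _ => monomialSize_nonneg (fun i => (hX i).1) d)
      fun d _ => monomialSize_le_one hX d
  refine le_csSup hbdd ⟨univ.image r, ?_, ?_⟩
  · rw [card_image_of_injective _ hr, Finset.card_univ]
  · rw [prod_image hr.injOn]

end MonomialSize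

theorem norm_det_monomials_le {𝕜 ι σ : Type*} [NormedField 𝕜] [Fintype ι] [DecidableEq ι]
    [Fintype σ] {X : σ → ℝ} (hX : ∀ i, 0 ≤ X i ∧ X i ≤ 1) {x : ι → σ → 𝕜}
    (hx : ∀ j i, ‖x j i‖ ≤ X i) (r : ι → σ →₀ ℕ) :
    ‖det (of fun i j => ∏ k, x j k ^ r i k)‖
      ≤ (Fintype.card ι)! * monomialSizeSup X (Fintype.card ι) := by
  by_cases hr : Function.Injective r
  · refine (norm_det_le_factorial_mul_prod _ fun i j =>
      norm_prod_pow_le_monomialSize (hx j) (r i)).trans ?_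
    gcongr
    exact prod_monomialSize_le_monomialSizeSup hX hr
  · obtain ⟨a, b, hab, hne⟩ := Function.not_injective_iff.1 hr
    rw [det_zero_of_row_eq hne (funext fun j => by simp [hab]), norm_zero]
    exact mul_nonneg (cast_nonneg _) (monomialSizeSup_nonneg (fun i => (hX i).1) _)

theorem MvPolynomial.det_eval_eq_sum {R ι σ : Type*} [CommRing R] [Fintype ι] [DecidableEq ι]
    [Fintype σ] (f : ι → MvPolynomial σ R) (x : ι → σ → R) :
    det (of fun i j => eval (x j) (f i))
      = ∑ r ∈ Fintype.piFinset fun i => (f i).support,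
          (∏ i, coeff (r i) (f i)) * det (of fun i j => ∏ k, x j k ^ r i k) := by
  have hrows : (of fun i j => eval (x j) (f i))
      = of fun i => ∑ d ∈ (f i).support, coeff d (f i) • fun j => ∏ k, x j k ^ d k := by
    ext i j
    simp [eval_eq']
  rw [hrows, det_of_sum_smul]

theorem stmt8_general (n D H : ℕ) :
    ∃ C : ℝ, ∀ X : Fin n → ℝ, (∀ i, 0 ≤ X i ∧ X i ≤ 1) →
      ∀ (f : Fin H → MvPolynomial (Fin n) ℂ) (x : Fin H → Fin n → ℂ) (hgt : ℝ),
      (∀ j, (f j).totalDegree ≤ D) →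
      (∀ j d, ‖(f j).coeff d‖ ≤ hgt) →
      (∀ j i, ‖x j i‖ ≤ X i) →
      ‖Matrix.det (Matrix.of fun i j : Fin H =>
          MvPolynomial.eval (x j) (f i))‖
        ≤ C * hgt ^ H *
          sSup {p : ℝ | ∃ s : Finset (Fin n →₀ ℕ), s.card = H ∧
            p = ∏ d ∈ s, ∏ i, X i ^ d i} := by
  refine ⟨((D + 1) ^ n) ^ H * H !, fun X hX f x hgt hdeg hcoef hx => ?_⟩
  show _ ≤ _ * monomialSizeSup X H
  have hcoeffs (r : Fin H → Fin n →₀ ℕ) : ‖∏ i, coeff (r i) (f i)‖ ≤ hgt ^ H := by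
    rw [norm_prod, ← Fin.prod_const]
    exact prod_le_prod (fun i _ => norm_nonneg _) fun i _ => hcoef i (r i)
  -- not via `0 ≤ hgt`, which fails for `H = 0`
  have hgt_pow : 0 ≤ hgt ^ H := (norm_nonneg _).trans (hcoeffs 0)
  have hterms : #(Fintype.piFinset fun i => (f i).support) ≤ ((D + 1) ^ n) ^ H := by
    rw [Fintype.card_piFinset, ← Fin.prod_const]
    exact prod_le_prod' fun i _ =>
      (card_support_le_of_totalDegree_le (hdeg i)).trans_eq (by rw [Fintype.card_fin])
  have hdet := norm_det_monomials_le hX hx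
  simp only [Fintype.card_fin] at hdet
  rw [det_eval_eq_sum]
  have hbound_nonneg : 0 ≤ hgt ^ H * (H ! * monomialSizeSup X H) :=
    mul_nonneg hgt_pow (mul_nonneg (cast_nonneg _) (monomialSizeSup_nonneg (fun i => (hX i).1) _))
  calc _ ≤ ∑ _r ∈ Fintype.piFinset fun i => (f i).support,
          hgt ^ H * (H ! * monomialSizeSup X H) :=
        norm_sum_le_of_le _ fun r _ => (norm_mul_le _ _).trans
          (mul_le_mul (hcoeffs r) (hdet r) (norm_nonneg _) hgt_pow)
    _ ≤ ((D + 1) ^ n) ^ H * (hgt ^ H * (H ! * monomialSizeSup X H)) := by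
        rw [sum_const, nsmul_eq_mul]
        exact mul_le_mul_of_nonneg_right (by exact_mod_cast hterms) hbound_nonneg
    _ = _ := by ring

/-- Heath-Brown's generalized Vandermonde determinant bound
(Marmon, Lemma 3.3 / Heath-Brown, Lemma 3): given `n, D, H ≥ 1` there is a
constant `C = C(n,H,D)` such that for all `0 ≤ Xᵢ ≤ 1`, all polynomials
`f₁,…,f_H ∈ ℂ[x₁,…,xₙ]` of degree at most `D` whose coefficients all have
modulus at most `hgt`, and all points `x⁽¹⁾,…,x⁽ᴴ⁾ ∈ ℂⁿ` with `|xᵢ⁽ʲ⁾| ≤ Xᵢ`,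
the determinant `det(fᵢ(x⁽ʲ⁾))` has modulus at most `C · hgt^H · Π`, where `Π`
is the supremum over all `H`-element sets of monomials of the product of their
sizes `‖x^α‖ = ∏ Xᵢ^{αᵢ}` (i.e. the product of the `H` largest monomial
sizes). -/
theorem stmt8 (n D H : ℕ) (hn : 0 < n) (hD : 0 < D) (hH : 0 < H) :
    ∃ C : ℝ, ∀ X : Fin n → ℝ, (∀ i, 0 ≤ X i ∧ X i ≤ 1) →
      ∀ (f : Fin H → MvPolynomial (Fin n) ℂ) (x : Fin H → Fin n → ℂ) (hgt : ℝ),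
      (∀ j, (f j).totalDegree ≤ D) →
      (∀ j d, ‖(f j).coeff d‖ ≤ hgt) →
      (∀ j i, ‖x j i‖ ≤ X i) →
      ‖Matrix.det (Matrix.of fun i j : Fin H =>
          MvPolynomial.eval (x j) (f i))‖
        ≤ C * hgt ^ H *
          sSup {p : ℝ | ∃ s : Finset (Fin n →₀ ℕ), s.card = H ∧
            p = ∏ d ∈ s, ∏ i, X i ^ d i} :=
  stmt8_general n D H
end

section
/- Let α > 0 and ν > 1 be real numbers, and let f̃ denote the sum of n1 + n2 + α·n3 over all triples (n1,n2,n3) of non-negative integers satisfying n1 + n2 + α·n3 ≤ ν − 1. Then f̃ ≥ (ν − 1)⁴/(8α) − (2 + α)·(ν + 1 + α)³/(6α). -/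
/-!
Slice the tetrahedron by the value of `n₃`. The slice with `n₃ = n` is the lattice triangle
`n₁ + n₂ ≤ m`, `m = L - α n`, `L = ν - 1`, on which the sum of `n₁ + n₂ + α n` is computed in
closed form; it exceeds the integral of `x + y + α n` over the real triangle minus `m / 3`.
These slice integrals decrease in `n`, so their sum over `n = 0, …, ⌊L/α⌋` dominates the integral
over the height, which is the tetrahedron integral `L⁴/(8α)`. The accumulated error
`(⌊L/α⌋ + 1) L / 3` is at most `(2 + α)(ν + 1 + α)³/(6α)`.
-/

open Finset intervalIntegral

def triangle (M : ℕ) : Finset (ℕ × ℕ) :=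
  (range (M + 1)).biUnion antidiagonal

theorem mem_triangle {M : ℕ} {q : ℕ × ℕ} : q ∈ triangle M ↔ q.1 + q.2 ≤ M := by
  simp [triangle]

theorem sum_range_succ_mul_add (M : ℕ) (c : ℝ) :
    ∑ k ∈ range (M + 1), ((k : ℝ) + 1) * (k + c) =
      M * (M + 1) * (M + 2) / 3 + c * (M + 1) * (M + 2) / 2 := by
  induction M with
  | zero => simp
  | succ M ih => rw [sum_range_succ, ih]; push_cast; ring

theorem sum_triangle (M : ℕ) (c : ℝ) :
    ∑ q ∈ triangle M, ((q.1 : ℝ) + q.2 + c) =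
      M * (M + 1) * (M + 2) / 3 + c * (M + 1) * (M + 2) / 2 := by
  have hdisj : (range (M + 1) : Set ℕ).PairwiseDisjoint antidiagonal := fun i _ j _ hij =>
    disjoint_left.2 fun q hi hj => hij ((mem_antidiagonal.1 hi).symm.trans (mem_antidiagonal.1 hj))
  rw [triangle, sum_biUnion hdisj, ← sum_range_succ_mul_add]
  refine sum_congr rfl fun k _ => ?_
  have hk : ∀ q ∈ antidiagonal k, (q.1 : ℝ) + q.2 + c = k + c := fun q hq => by
    rw [← mem_antidiagonal.1 hq, Nat.cast_add]
  rw [sum_congr rfl hk, sum_const, Nat.card_antidiagonal, nsmul_eq_mul]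
  push_cast; ring

/-- `∫ (x + y + c)` over the triangle `x, y ≥ 0, x + y ≤ m`. -/
noncomputable def triangleMoment (m c : ℝ) : ℝ := m ^ 3 / 3 + c * m ^ 2 / 2

theorem triangleMoment_sub_le_sum_triangle {m c : ℝ} (hm : 0 ≤ m) (hc : 0 ≤ c) :
    triangleMoment m c - m / 3 ≤ ∑ q ∈ triangle ⌊m⌋₊, ((q.1 : ℝ) + q.2 + c) := by
  rw [sum_triangle, triangleMoment]
  set M : ℝ := (⌊m⌋₊ : ℝ)
  have hM : 0 ≤ M := Nat.cast_nonneg _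
  have hmM : m < M + 1 := Nat.lt_floor_add_one m
  have hsq : m ^ 2 ≤ (M + 1) * (M + 2) := by nlinarith
  have hcube : m ^ 3 - m ≤ M * (M + 1) * (M + 2) := by
    rw [show m ^ 3 - m = (m - 1) * m * (m + 1) by ring]
    rcases le_or_gt 1 m with h | h
    · exact mul_le_mul (mul_le_mul (by linarith) hmM.le hm hM) (by linarith) (by linarith)
        (by positivity)
    · calc (m - 1) * m * (m + 1) ≤ 0 :=
            mul_nonpos_of_nonpos_of_nonneg (mul_nonpos_of_nonpos_of_nonneg (by linarith) hm)
              (by linarith)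
        _ ≤ M * (M + 1) * (M + 2) := by positivity
  nlinarith [mul_le_mul_of_nonneg_left hsq hc]

theorem monotoneOn_triangleMoment_sub (L : ℝ) :
    MonotoneOn (fun u => triangleMoment u (L - u)) (Set.Icc 0 L) := by
  intro v hv u hu hvu
  simp only [triangleMoment]
  nlinarith [mul_nonneg (sub_nonneg.2 hvu) (mul_nonneg hv.1 (sub_nonneg.2 hv.2)),
    mul_nonneg (sub_nonneg.2 hvu) (mul_nonneg hu.1 (sub_nonneg.2 hu.2)),
    mul_nonneg (sub_nonneg.2 hvu) (mul_nonneg hv.1 (sub_nonneg.2 hu.2)),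
    mul_nonneg (sub_nonneg.2 hvu) (mul_nonneg hu.1 (sub_nonneg.2 hv.2)),
    mul_nonneg (sub_nonneg.2 hvu) (mul_nonneg hu.1 hv.1)]

theorem integral_triangleMoment_sub (L : ℝ) :
    ∫ u in (0 : ℝ)..L, triangleMoment u (L - u) = L ^ 4 / 8 := by
  have : (fun u => triangleMoment u (L - u)) = fun u => L / 2 * u ^ 2 - 1 / 6 * u ^ 3 := by
    funext u; simp only [triangleMoment]; ring
  rw [this, integral_sub, integral_const_mul, integral_const_mul, integral_pow, integral_pow]
  · ring
  all_goals exact (by fun_prop : Continuous _).intervalIntegrable _ _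

theorem AntitoneOn.integral_le_sum_range_floor_add_one {f : ℝ → ℝ} {T : ℝ} (hT : 0 ≤ T)
    (hf : AntitoneOn f (Set.Icc 0 T)) (hfT : 0 ≤ f T) :
    ∫ x in (0 : ℝ)..T, f x ≤ ∑ i ∈ range (⌊T⌋₊ + 1), f i := by
  set N := ⌊T⌋₊
  have hN0 : (0 : ℝ) ≤ N := Nat.cast_nonneg N
  have hNT : (N : ℝ) ≤ T := Nat.floor_le hT
  have hTN : T - N ≤ 1 := by linarith [Nat.lt_floor_add_one T]
  have hint : ∀ a ∈ Set.Icc 0 T, ∀ b ∈ Set.Icc 0 T, IntervalIntegrable f MeasureTheory.volume a b :=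
    fun a ha b hb => (hf.mono (Set.uIcc_subset_Icc ha hb)).intervalIntegrable
  have hNmem : (N : ℝ) ∈ Set.Icc 0 T := ⟨hN0, hNT⟩
  have hhead : ∫ x in (0 : ℝ)..N, f x ≤ ∑ i ∈ range N, f i := by
    simpa using AntitoneOn.integral_le_sum (x₀ := 0) (a := N)
      (hf.mono (by simpa using Set.Icc_subset_Icc_right hNT))
  have htail : ∫ x in (N : ℝ)..T, f x ≤ f N := calc
    _ ≤ ∫ _ in (N : ℝ)..T, f N :=
      integral_mono_on hNT (hint _ hNmem _ ⟨hT, le_rfl⟩) intervalIntegrable_const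
        fun x hx => hf hNmem ⟨hN0.trans hx.1, hx.2⟩ hx.1
    _ = (T - N) * f N := by rw [integral_const, smul_eq_mul]
    _ ≤ f N := mul_le_of_le_one_left (hfT.trans (hf hNmem ⟨hT, le_rfl⟩ hNT)) hTN
  rw [← integral_add_adjacent_intervals (hint 0 ⟨le_rfl, hT⟩ N hNmem) (hint N hNmem T ⟨hT, le_rfl⟩),
    sum_range_succ]
  exact add_le_add hhead htail

theorem pow_four_div_le_sum_triangleMoment {α L : ℝ} (hα : 0 < α) (hL : 0 ≤ L) :
    L ^ 4 / (8 * α) ≤ ∑ n ∈ range (⌊L / α⌋₊ + 1), triangleMoment (L - α * n) (α * n) := by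
  set g := fun u => triangleMoment u (L - u)
  have hmaps : ∀ z ∈ Set.Icc 0 (L / α), L - α * z ∈ Set.Icc 0 L := fun z hz =>
    ⟨by linarith [(le_div_iff₀' hα).1 hz.2], by nlinarith [hz.1]⟩
  have hanti : AntitoneOn (fun z => g (L - α * z)) (Set.Icc 0 (L / α)) :=
    fun x hx y hy hxy => monotoneOn_triangleMoment_sub L (hmaps y hy) (hmaps x hx)
      (by nlinarith)
  have hend : 0 ≤ g (L - α * (L / α)) := by
    simp [g, mul_div_cancel₀ L hα.ne', triangleMoment]
  calc L ^ 4 / (8 * α) = ∫ z in (0 : ℝ)..L / α, g (L - α * z) := by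
        rw [integral_comp_sub_mul _ hα.ne', mul_div_cancel₀ L hα.ne', sub_self, mul_zero, sub_zero,
          integral_triangleMoment_sub, smul_eq_mul]
        field_simp
    _ ≤ ∑ n ∈ range (⌊L / α⌋₊ + 1), g (L - α * n) :=
        hanti.integral_le_sum_range_floor_add_one (div_nonneg hL hα.le) hend
    _ = _ := by simp only [g, sub_sub_cancel]

theorem mul_le_of_le_floor_div {α L : ℝ} (hα : 0 < α) (hL : 0 ≤ L) {n : ℕ}
    (hn : n ≤ ⌊L / α⌋₊) : α * n ≤ L :=
  (le_div_iff₀' hα).1 ((Nat.cast_le.2 hn).trans (Nat.floor_le (div_nonneg hL hα.le)))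

theorem add_add_mul_le_iff {α L : ℝ} (hα : 0 < α) (hL : 0 ≤ L) {a b n : ℕ} :
    (a : ℝ) + b + α * n ≤ L ↔ n ≤ ⌊L / α⌋₊ ∧ a + b ≤ ⌊L - α * n⌋₊ := by
  constructor
  · intro h
    have hn : α * n ≤ L := by
      have : (0 : ℝ) ≤ a + b := by positivity
      linarith
    exact ⟨Nat.le_floor ((le_div_iff₀' hα).2 hn), Nat.le_floor (by push_cast; linarith)⟩
  · rintro ⟨hn, hab⟩
    have := (Nat.cast_le (α := ℝ)).2 hab |>.trans
      (Nat.floor_le (sub_nonneg.2 (mul_le_of_le_floor_div hα hL hn)))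
    push_cast at this
    linarith

theorem finsum_mem_setOf_add_add_mul_le {M : Type*} [AddCommMonoid M] (f : ℕ × ℕ × ℕ → M)
    {α L : ℝ} (hα : 0 < α) (hL : 0 ≤ L) :
    ∑ᶠ p ∈ {p : ℕ × ℕ × ℕ | (p.1 : ℝ) + p.2.1 + α * p.2.2 ≤ L}, f p =
      ∑ n ∈ range (⌊L / α⌋₊ + 1), ∑ q ∈ triangle ⌊L - α * n⌋₊, f (q.1, q.2, n) := by
  set e : (Σ _ : ℕ, ℕ × ℕ) → ℕ × ℕ × ℕ := fun x => (x.2.1, x.2.2, x.1)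
  set s := (range (⌊L / α⌋₊ + 1)).sigma fun n => triangle ⌊L - α * n⌋₊
  have hset : {p : ℕ × ℕ × ℕ | (p.1 : ℝ) + p.2.1 + α * p.2.2 ≤ L} = ↑(s.image e) := by
    ext ⟨a, b, n⟩
    simp [s, e, mem_triangle, add_add_mul_le_iff hα hL]
  have he : Set.InjOn e s := fun x _ y _ h => by
    simp only [e, Prod.mk.injEq] at h
    exact Sigma.ext h.2.2 (heq_of_eq (Prod.ext h.1 h.2.1))
  rw [hset, finsum_mem_coe_finset, sum_image he, sum_sigma]

/-- Marmon, estimate (3.12): for real `α > 0` and `ν > 1`, the sum `f̃` of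
`n₁ + n₂ + α·n₃` over all triples of non-negative integers with
`n₁ + n₂ + α·n₃ ≤ ν - 1` satisfies `f̃ ≥ (ν-1)⁴/(8α) - (2+α)(ν+1+α)³/(6α)`. -/
theorem stmt15 (α ν : ℝ) (hα : 0 < α) (hν : 1 < ν) :
    (ν - 1) ^ 4 / (8 * α) - (2 + α) * (ν + 1 + α) ^ 3 / (6 * α) ≤
      ∑ᶠ p ∈ {p : ℕ × ℕ × ℕ | (p.1 : ℝ) + (p.2.1 : ℝ) + α * (p.2.2 : ℝ) ≤ ν - 1},
        ((p.1 : ℝ) + (p.2.1 : ℝ) + α * (p.2.2 : ℝ)) := by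
  set L := ν - 1
  have hL : 0 < L := sub_pos.2 hν
  have hslices : (⌊L / α⌋₊ + 1) * (L / 3) ≤ (2 + α) * (ν + 1 + α) ^ 3 / (6 * α) := by
    have hN : (⌊L / α⌋₊ : ℝ) ≤ L / α := Nat.floor_le (div_nonneg hL.le hα.le)
    calc (⌊L / α⌋₊ + 1) * (L / 3) ≤ (L / α + 1) * (L / 3) := by gcongr
      _ = 2 * (L * (L + α)) / (6 * α) := by field_simp; ring
      _ ≤ (2 + α) * (ν + 1 + α) ^ 3 / (6 * α) := by
        have hν' : ν + 1 + α = (L + α) + 2 := by ring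
        gcongr
        · linarith
        · rw [hν']
          nlinarith [mul_pos hL hα, pow_pos (add_pos hL hα) 3, sq_nonneg (L + α)]
  rw [finsum_mem_setOf_add_add_mul_le _ hα hL.le]
  calc _ ≤ L ^ 4 / (8 * α) - ∑ _n ∈ range (⌊L / α⌋₊ + 1), L / 3 := by
        rw [sum_const, card_range, nsmul_eq_mul]; push_cast; linarith
    _ ≤ ∑ n ∈ range (⌊L / α⌋₊ + 1), (triangleMoment (L - α * n) (α * n) - (L - α * n) / 3) := by
        rw [sum_sub_distrib]
        gcongr with n
        · exact pow_four_div_le_sum_triangleMoment hα hL.le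
        · have : 0 ≤ α * n := by positivity
          linarith
    _ ≤ _ := sum_le_sum fun n hn => triangleMoment_sub_le_sum_triangle
        (sub_nonneg.2 (mul_le_of_le_floor_div hα hL.le (Nat.lt_succ_iff.1 (mem_range.1 hn))))
        (by positivity)
end

section
/- Let k ≥ 4 be an integer, a1, a2, a3, a4 nonzero integers and N a positive integer. Let X = {x ∈ ℂ⁴ : a1·x1^k + a2·x2^k + a3·x3^k + a4·x4^k = N}, and let V ⊆ ℂ⁴ be the union of the sets V_i = {x : ai·xi^k = N and Σ_{j≠i} aj·xj^k = 0} for 1 ≤ i ≤ 4 and W_{i,j} = {x : ai·xi^k + aj·xj^k = N and Σ_{ℓ≠i,j} aℓ·xℓ^k = 0} for 1 ≤ i < j ≤ 4. Then V equals the union of all affine complex lines contained in X; that is, a point p ∈ X lies on some line L = {p + t·v : t ∈ ℂ} (with v ∈ ℂ⁴, v ≠ 0) entirely contained in X if and only if p ∈ V. -/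
/-!
Expanding `∑ cᵢ (pᵢ + t vᵢ)^k` in `t`, the line `p + t v` lies on `∑ cᵢ xᵢ^k = M` exactly when
`∑ cᵢ pᵢ^j vᵢ^(k-j) = 0` for all `j < k`. With weights `wᵢ = cᵢ vᵢ^k` and nodes `rᵢ = pᵢ / vᵢ`
these are the power sums `∑ wᵢ rᵢ^j`, `j < k`; as `k` is at least the number of nodes, all power
sums then vanish (reduce `X^n` modulo `∏ (X - rᵢ)`). The power sums of order `0` and `k` say
that on the support `S` of `v` both `∑ cᵢ vᵢ^k` and `∑ cᵢ pᵢ^k` vanish, so `|S| ≥ 2`.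
Conversely, if `∑_{i ∈ T} cᵢ pᵢ^k = 0` with `|T| ≥ 2`, scaling the `T`-coordinates of `p` (or, if
they all vanish, moving two of them along a root of `-cᵢ/cⱼ`) gives a line. For four
coordinates and `M ≠ 0`, `T` has two or three elements: these are the `W_{i,j}` and the `Vᵢ`.
-/

open Polynomial Finset

theorem Polynomial.coeff_C_add_X_mul_C_pow {R : Type*} [CommSemiring R] (a b : R) (k m : ℕ) :
    ((C a + X * C b) ^ k).coeff m = k.choose m * a ^ (k - m) * b ^ m := by
  have hterm : ∀ i, (X * C b) ^ i * C a ^ (k - i) * (k.choose i : R[X]) =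
      C (k.choose i * a ^ (k - i) * b ^ i) * X ^ i := fun i => by
    simp only [map_mul, map_pow, map_natCast]; ring
  rw [add_comm, add_pow, finsetSum_coeff]
  simp_rw [hterm, coeff_C_mul_X_pow, sum_ite_eq, mem_range]
  split_ifs with hm
  · rfl
  · simp [Nat.choose_eq_zero_of_lt (by omega : k < m)]

theorem sum_mul_pow_eq_zero_of_forall_lt_card {R ι : Type*} [CommRing R] [Fintype ι]
    (w r : ι → R) (h : ∀ j < Fintype.card ι, ∑ i, w i * r i ^ j = 0) (n : ℕ) :
    ∑ i, w i * r i ^ n = 0 := by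
  cases isEmpty_or_nonempty ι
  · simp
  nontriviality R
  set q : R[X] := ∏ i, (X - C (r i))
  have hq : q.Monic := monic_prod_of_monic _ _ fun i _ => monic_X_sub_C (r i)
  have hq_deg : q.natDegree = Fintype.card ι := natDegree_finsetProd_X_sub_C_eq_card _ _
  have hq_root : ∀ i, q.eval (r i) = 0 := fun i => by
    rw [eval_prod]; exact prod_eq_zero (mem_univ i) (by simp)
  set g := X ^ n %ₘ q
  have hg : g.natDegree < Fintype.card ι := hq_deg ▸ natDegree_modByMonic_lt _ hq fun h1 => by
    simp [h1, Fintype.card_ne_zero.symm] at hq_deg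
  have hpow : ∀ i, r i ^ n = ∑ m ∈ range (Fintype.card ι), g.coeff m * r i ^ m := fun i => by
    rw [← eval_eq_sum_range' hg, ← eval_X_pow (x := r i) (n := n), ← modByMonic_add_div (X ^ n) q]
    simp [hq_root, g]
  calc ∑ i, w i * r i ^ n = ∑ m ∈ range (Fintype.card ι), g.coeff m * ∑ i, w i * r i ^ m := by
        simp_rw [hpow, mul_sum, sum_comm (s := univ), mul_left_comm]
    _ = 0 := sum_eq_zero fun m hm => by rw [h m (mem_range.mp hm), mul_zero]

theorem sum_mul_pow_mul_pow_eq_zero_of_line {K ι : Type*} [Field K] [CharZero K] [Fintype ι]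
    {k : ℕ} {c p v : ι → K} {M : K} (h : ∀ t, ∑ i, c i * (p i + t * v i) ^ k = M)
    {j : ℕ} (hj : j < k) : ∑ i, c i * p i ^ j * v i ^ (k - j) = 0 := by
  set P : K[X] := ∑ i, C (c i) * (C (p i) + X * C (v i)) ^ k
  have hP : P = C M := Polynomial.funext fun t => by
    simp only [P, eval_finsetSum, eval_mul, eval_add, eval_pow, eval_C, eval_X]
    exact h t
  have hcoeff := congrArg (coeff · (k - j)) hP
  simp only [P, finsetSum_coeff, coeff_C_mul, coeff_C_add_X_mul_C_pow, coeff_C,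
    if_neg (Nat.sub_ne_zero_of_lt hj), Nat.sub_sub_self hj.le, Nat.choose_symm hj.le] at hcoeff
  have hchoose : (k.choose j : K) ≠ 0 := Nat.cast_ne_zero.mpr (Nat.choose_pos hj.le).ne'
  refine (mul_eq_zero.mp ?_).resolve_left hchoose
  rw [mul_sum, ← hcoeff]
  exact sum_congr rfl fun i _ => by ring

theorem sum_mul_pow_mul_div_pow_eq_zero_of_line {K ι : Type*} [Field K] [CharZero K]
    [Fintype ι] {k : ℕ} (hk : Fintype.card ι ≤ k) {c p v : ι → K} {M : K}
    (h : ∀ t, ∑ i, c i * (p i + t * v i) ^ k = M) (n : ℕ) :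
    ∑ i, c i * v i ^ k * (p i / v i) ^ n = 0 := by
  refine sum_mul_pow_eq_zero_of_forall_lt_card _ _ (fun j hj => ?_) n
  have hjk : j < k := hj.trans_le hk
  rw [← sum_mul_pow_mul_pow_eq_zero_of_line h hjk]
  refine sum_congr rfl fun i _ => ?_
  rcases eq_or_ne (v i) 0 with hv | hv
  · simp [hv, zero_pow (Nat.sub_ne_zero_of_lt hjk), zero_pow (hjk.trans_le' j.zero_le).ne']
  · rw [div_pow, pow_sub₀ _ hv hjk.le]
    field_simp

theorem exists_vanishing_subsum_of_line {K ι : Type*} [Field K] [CharZero K] [Fintype ι]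
    {k : ℕ} (hk : Fintype.card ι ≤ k) {c p v : ι → K} (hc : ∀ i, c i ≠ 0) (hv : v ≠ 0) {M : K}
    (h : ∀ t, ∑ i, c i * (p i + t * v i) ^ k = M) :
    ∃ T : Finset ι, 1 < #T ∧ ∑ i ∈ T, c i * p i ^ k = 0 := by
  classical
  obtain ⟨i, hi⟩ : ∃ i, v i ≠ 0 := Function.ne_iff.mp hv
  have hk0 : k ≠ 0 := (Fintype.card_pos_iff.mpr ⟨i⟩).trans_le hk |>.ne'
  refine ⟨univ.filter (v · ≠ 0), one_lt_card.mpr ?_, ?_⟩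
  · by_contra! hsingle
    have hsum := sum_mul_pow_mul_div_pow_eq_zero_of_line hk h 0
    simp only [pow_zero, mul_one] at hsum
    rw [sum_eq_single i (fun j _ hji => ?_) (by simp)] at hsum
    · exact mul_ne_zero (hc i) (pow_ne_zero k hi) hsum
    · have hj : v j = 0 := by_contra fun hj => hji (hsingle j (by simpa) i (by simpa))
      simp [hj, zero_pow hk0]
  · calc ∑ j ∈ univ.filter (v · ≠ 0), c j * p j ^ k
        = ∑ j, c j * v j ^ k * (p j / v j) ^ k := by
          rw [sum_filter]
          refine sum_congr rfl fun j _ => ?_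
          split_ifs with hj
          · rw [div_pow]; field_simp
          · simp [not_not.mp hj, zero_pow hk0]
      _ = 0 := sum_mul_pow_mul_div_pow_eq_zero_of_line hk h k

theorem exists_line_of_vanishing_subsum {K ι : Type*} [Field K] [IsAlgClosed K] [Fintype ι]
    [DecidableEq ι] {k : ℕ} (hk : k ≠ 0) {c : ι → K} (hc : ∀ i, c i ≠ 0) {p : ι → K}
    {T : Finset ι} (hT : 1 < #T) (h0 : ∑ i ∈ T, c i * p i ^ k = 0) :
    ∃ v : ι → K, v ≠ 0 ∧ ∀ t, ∑ i, c i * (p i + t * v i) ^ k = ∑ i, c i * p i ^ k := by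
  by_cases hp : ∀ i ∈ T, p i = 0
  · obtain ⟨i, hi, j, hj, hij⟩ := one_lt_card.mp hT
    obtain ⟨z, hz⟩ := IsAlgClosed.exists_pow_nat_eq (-(c i / c j)) (Nat.pos_of_ne_zero hk)
    refine ⟨Pi.single i 1 + Pi.single j z, fun hv => by simpa [hij] using congrFun hv i,
      fun t => ?_⟩
    rw [← sub_eq_zero, ← sum_sub_distrib, Fintype.sum_eq_add i j hij fun l ⟨hli, hlj⟩ => by
      simp [hli, hlj]]
    simp only [Pi.add_apply, Pi.single_eq_same, Pi.single_eq_of_ne hij, Pi.single_eq_of_ne' hij,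
      hp i hi, hp j hj, zero_pow hk, zero_add, add_zero, mul_one, mul_zero, sub_zero]
    rw [mul_pow t z, hz]
    field_simp [hc j]
    ring
  · obtain ⟨i, hi, hpi⟩ := not_forall₂.mp hp
    refine ⟨fun l => if l ∈ T then p l else 0, fun hv => hpi (by simpa [hi] using congrFun hv i),
      fun t => ?_⟩
    rw [← sum_add_sum_compl T, ← sum_add_sum_compl T (fun l => c l * p l ^ k)]
    congr 1
    · calc ∑ l ∈ T, c l * (p l + t * if l ∈ T then p l else 0) ^ k
          = (1 + t) ^ k * ∑ l ∈ T, c l * p l ^ k := by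
            rw [mul_sum]
            refine sum_congr rfl fun l hl => ?_
            rw [if_pos hl, show p l + t * p l = p l * (1 + t) by ring, mul_pow]
            ring
        _ = ∑ l ∈ T, c l * p l ^ k := by rw [h0, mul_zero]
    · exact sum_congr rfl fun l hl => by simp only [if_neg (mem_compl.mp hl), mul_zero, add_zero]

theorem exists_line_iff_exists_vanishing_subsum {K ι : Type*} [Field K] [IsAlgClosed K]
    [CharZero K] [Fintype ι] {k : ℕ} (hk : Fintype.card ι ≤ k) {c : ι → K} (hc : ∀ i, c i ≠ 0)
    (p : ι → K) :
    (∃ v : ι → K, v ≠ 0 ∧ ∀ t, ∑ i, c i * (p i + t * v i) ^ k = ∑ i, c i * p i ^ k) ↔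
      ∃ T : Finset ι, 1 < #T ∧ ∑ i ∈ T, c i * p i ^ k = 0 := by
  classical
  refine ⟨fun ⟨v, hv, h⟩ => exists_vanishing_subsum_of_line hk hc hv h, fun ⟨T, hT, h0⟩ => ?_⟩
  have hk0 : k ≠ 0 := by have := T.card_le_univ; omega
  exact exists_line_of_vanishing_subsum hk0 hc hT h0

theorem Finset.fin_four_eq_erase_or_eq_erase_erase :
    ∀ T : Finset (Fin 4), 1 < #T → T ≠ univ →
      (∃ i, T = univ.erase i) ∨ ∃ i j, i < j ∧ T = (univ.erase i).erase j := by
  decide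

theorem Fin.exists_vanishing_subsum_iff {M : Type*} [AddCommGroup M] (f : Fin 4 → M) {N : M}
    (hN : N ≠ 0) (hf : ∑ i, f i = N) :
    (∃ T : Finset (Fin 4), 1 < #T ∧ ∑ i ∈ T, f i = 0) ↔
      (∃ i, f i = N ∧ ∑ j ∈ univ.erase i, f j = 0) ∨
        ∃ i j, i < j ∧ f i + f j = N ∧ ∑ l ∈ (univ.erase i).erase j, f l = 0 := by
  have hsum_erase : ∀ i, f i + ∑ j ∈ univ.erase i, f j = N := fun i =>
    (add_sum_erase _ f (mem_univ i)).trans hf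
  have hsum_erase_erase : ∀ i j, i < j →
      f i + f j + ∑ l ∈ (univ.erase i).erase j, f l = N := fun i j hij => by
    rw [add_assoc, add_sum_erase _ f (mem_erase.mpr ⟨hij.ne', mem_univ j⟩), hsum_erase]
  constructor
  · rintro ⟨T, hT, h0⟩
    have hT_ne : T ≠ univ := by rintro rfl; exact hN (hf.symm.trans h0)
    rcases fin_four_eq_erase_or_eq_erase_erase T hT hT_ne with ⟨i, rfl⟩ | ⟨i, j, hij, rfl⟩
    · exact .inl ⟨i, by simpa [h0] using hsum_erase i, h0⟩
    · exact .inr ⟨i, j, hij, by simpa [h0] using hsum_erase_erase i j hij, h0⟩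
  · rintro (⟨i, -, h0⟩ | ⟨i, j, hij, -, h0⟩)
    · exact ⟨_, by simp, h0⟩
    · refine ⟨_, ?_, h0⟩
      rw [card_erase_of_mem (mem_erase.mpr ⟨hij.ne', mem_univ j⟩), card_erase_of_mem (mem_univ i)]
      simp

/-- Marmon, Section 5 (description of the lines on `X`): for `k ≥ 4`, nonzero
integers `a₁,…,a₄` and a positive integer `N`, a point `p` of the affine complex
hypersurface `X : a₁x₁^k + ⋯ + a₄x₄^k = N` lies on an affine line entirely
contained in `X` if and only if `p` belongs to one of the subvarieties `Vᵢ`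
(`aᵢxᵢ^k = N`, `∑_{j≠i} aⱼxⱼ^k = 0`) or `W_{i,j}` (`aᵢxᵢ^k + aⱼxⱼ^k = N`,
`∑_{l≠i,j} a_l x_l^k = 0`, `i < j`). -/
theorem stmt19 (k : ℕ) (hk : 4 ≤ k) (a : Fin 4 → ℤ) (ha : ∀ i, a i ≠ 0)
    (N : ℕ) (hN : 0 < N) :
    ∀ p : Fin 4 → ℂ, (∑ i, (a i : ℂ) * p i ^ k) = (N : ℂ) →
      ((∃ v : Fin 4 → ℂ, v ≠ 0 ∧
          ∀ t : ℂ, (∑ i, (a i : ℂ) * (p i + t * v i) ^ k) = (N : ℂ)) ↔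
        ((∃ i, (a i : ℂ) * p i ^ k = (N : ℂ) ∧
            (∑ j ∈ Finset.univ.erase i, (a j : ℂ) * p j ^ k) = 0) ∨
         (∃ i j, i < j ∧
            (a i : ℂ) * p i ^ k + (a j : ℂ) * p j ^ k = (N : ℂ) ∧
            (∑ l ∈ (Finset.univ.erase i).erase j, (a l : ℂ) * p l ^ k) = 0))) := by
  intro p hp
  have hline := exists_line_iff_exists_vanishing_subsum (by simpa using hk)
    (fun i => Int.cast_ne_zero.mpr (ha i)) p
  rw [hp] at hline
  exact hline.trans <| Fin.exists_vanishing_subsum_iff _ (Nat.cast_ne_zero.mpr hN.ne') hp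
end
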